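/- arXiv:0712.1401 — 10 statements merged into one kernel-verified Lean document; each statement's English description precedes it below -/
import Mathlib

section
/- Let r⁺ satisfy the partial cocycle identity (CCI⁺). Then for every pair of configurations γ⁺, γ⁻ ⊆ X, every finite configuration η⁺, and any two duplicate-free enumerations (x₁, …, xₙ) and (x'₁, …, x'ₙ) of η⁺, the two iterated products r⁺(γ⁺, γ⁻, x₁)·r⁺(γ⁺∪{x₁}, γ⁻, x₂)·…·r⁺(γ⁺∪{x₁,…,x_{n−1}}, γ⁻, xₙ) and r⁺(γ⁺, γ⁻, x'₁)·r⁺(γ⁺∪{x'₁}, γ⁻, x'₂)·…·r⁺(γ⁺∪{x'₁,…,x'_{n−1}}, γ⁻, x'ₙ) are equal; hence R⁺(γ⁺, γ⁻, η⁺) is well defined. -/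
/-! The cocycle identity says exactly that adding two points in either order gives the same
two-step product, so the iterated product is invariant under adjacent transpositions and
hence under all permutations; two duplicate-free enumerations of the same set are
permutations of each other. -/

open scoped NNReal

/-- Iterated product of the partial relative energy density `r⁺` along an
enumeration (list) of a finite configuration: the `+`-configuration grows by
one point at each step. -/
def RplusL {X : Type*} (rp : Set X → Set X → X → ℝ≥0) (γm : Set X) :
    Set X → List X → ℝ≥0
  | _, [] => 1
  | γp, x :: xs => rp γp γm x * RplusL rp γm (insert x γp) xs

section

variable {X : Type*} (rp : Set X → Set X → X → ℝ≥0)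
  (hCCIp : ∀ (γp γm : Set X) (x x' : X),
    rp (insert x' γp) γm x * rp γp γm x' = rp (insert x γp) γm x' * rp γp γm x)
  (γm : Set X)

include hCCIp

theorem RplusL_swap (γp : Set X) (x y : X) (l : List X) :
    RplusL rp γm γp (y :: x :: l) = RplusL rp γm γp (x :: y :: l) := by
  simp only [RplusL]
  calc rp γp γm y * (rp (insert y γp) γm x * RplusL rp γm (insert x (insert y γp)) l)
      = (rp (insert y γp) γm x * rp γp γm y) * RplusL rp γm (insert y (insert x γp)) l := by
        rw [Set.insert_comm]; ring
    _ = (rp (insert x γp) γm y * rp γp γm x) * RplusL rp γm (insert y (insert x γp)) l := by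
        rw [hCCIp]
    _ = rp γp γm x * (rp (insert x γp) γm y * RplusL rp γm (insert y (insert x γp)) l) := by
        ring

theorem RplusL_perm {l₁ l₂ : List X} (hp : l₁.Perm l₂) (γp : Set X) :
    RplusL rp γm γp l₁ = RplusL rp γm γp l₂ := by
  induction hp generalizing γp with
  | nil => rfl
  | cons x _ ih => simp only [RplusL, ih]
  | swap x y l => exact RplusL_swap rp hCCIp γm γp x y l
  | trans _ _ ih₁ ih₂ => rw [ih₁, ih₂]

end

/-- If `r⁺` satisfies the partial cocycle identity (CCI⁺), then for every pair of
configurations `γ⁺, γ⁻`, every finite configuration `η⁺`, and any two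
duplicate-free enumerations of `η⁺`, the corresponding iterated products
coincide; hence `R⁺(γ⁺, γ⁻, η⁺)` is well defined. -/
theorem Rplus_well_defined {X : Type*} [DecidableEq X]
    (rp : Set X → Set X → X → ℝ≥0)
    (hCCIp : ∀ (γp γm : Set X) (x x' : X),
      rp (insert x' γp) γm x * rp γp γm x' = rp (insert x γp) γm x' * rp γp γm x)
    (γp γm : Set X) (η : Finset X) (l₁ l₂ : List X)
    (h₁ : l₁.Nodup) (h₂ : l₂.Nodup)
    (hl₁ : l₁.toFinset = η) (hl₂ : l₂.toFinset = η) :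
    RplusL rp γm γp l₁ = RplusL rp γm γp l₂ :=
  RplusL_perm rp hCCIp γm (List.perm_of_nodup_nodup_toFinset_eq h₁ h₂ (hl₁.trans hl₂.symm)) γp
end

section
/- Let r⁺ satisfy the partial cocycle identity (CCI⁺). Then for all configurations γ⁺, γ⁻ ⊆ X and all disjoint finite configurations η₁⁺, η₂⁺: R⁺(γ⁺, γ⁻, η₁⁺ ∪ η₂⁺) = R⁺(γ⁺, γ⁻, η₁⁺)·R⁺(γ⁺ ∪ η₁⁺, γ⁻, η₂⁺). -/
open scoped NNReal

/-- `R⁺(γ⁺, γ⁻, η⁺)`: the iterated product of `r⁺` along a (fixed, arbitrary)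
duplicate-free enumeration of the finite configuration `η⁺`; under (CCI⁺) it is
independent of the enumeration. -/
noncomputable def Rplus {X : Type*} (rp : Set X → Set X → X → ℝ≥0)
    (γp γm : Set X) (η : Finset X) : ℝ≥0 :=
  RplusL rp γm γp η.toList

theorem Finset.toList_union_perm {α : Type*} [DecidableEq α] {s t : Finset α}
    (h : Disjoint s t) : (s ∪ t).toList.Perm (s.toList ++ t.toList) := by
  rw [← Multiset.coe_eq_coe, ← Multiset.coe_add, Finset.coe_toList, Finset.coe_toList,
    Finset.coe_toList, ← Finset.disjUnion_eq_union _ _ h, Finset.disjUnion_val]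

section RplusL

variable {X : Type*} (rp : Set X → Set X → X → ℝ≥0) (γm : Set X)

/-- The partial cocycle identity (CCI⁺) at a fixed `γ⁻`. -/
def PartialCocycle : Prop :=
  ∀ (γp : Set X) (x x' : X),
    rp (insert x' γp) γm x * rp γp γm x' = rp (insert x γp) γm x' * rp γp γm x

variable {rp γm}

theorem PartialCocycle.RplusL_perm (hrp : PartialCocycle rp γm) {l l' : List X}
    (h : l.Perm l') (γp : Set X) : RplusL rp γm γp l = RplusL rp γm γp l' := by
  induction h generalizing γp with
  | nil => rfl
  | cons x _ ih => simp only [RplusL, ih]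
  | swap x y l =>
    -- (CCI⁺) is exactly the statement that two consecutive factors may be swapped
    simp only [RplusL]
    rw [Set.insert_comm, ← mul_assoc, ← mul_assoc, mul_comm (rp γp γm y), hrp γp x y,
      mul_comm (rp (insert x γp) γm y)]
  | trans _ _ ih₁ ih₂ => rw [ih₁, ih₂]

theorem RplusL_append (l₁ l₂ : List X) (γp : Set X) :
    RplusL rp γm γp (l₁ ++ l₂) = RplusL rp γm γp l₁ * RplusL rp γm (γp ∪ {a | a ∈ l₁}) l₂ := by
  induction l₁ generalizing γp with
  | nil => simp [RplusL]
  | cons x l ih =>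
    have hγ : insert x γp ∪ {a | a ∈ l} = γp ∪ {a | a ∈ x :: l} := by
      ext a
      simp only [Set.mem_union, Set.mem_insert_iff, Set.mem_ofPred_eq, List.mem_cons]
      tauto
    rw [List.cons_append, RplusL, RplusL, ih, hγ, mul_assoc]

end RplusL

/-- If `r⁺` satisfies the partial cocycle identity (CCI⁺), then for all
configurations `γ⁺, γ⁻` and all disjoint finite configurations `η₁⁺, η₂⁺`:
`R⁺(γ⁺, γ⁻, η₁⁺ ∪ η₂⁺) = R⁺(γ⁺, γ⁻, η₁⁺)·R⁺(γ⁺ ∪ η₁⁺, γ⁻, η₂⁺)`. -/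
theorem Rplus_union {X : Type*} [DecidableEq X]
    (rp : Set X → Set X → X → ℝ≥0)
    (hCCIp : ∀ (γp γm : Set X) (x x' : X),
      rp (insert x' γp) γm x * rp γp γm x' = rp (insert x γp) γm x' * rp γp γm x)
    (γp γm : Set X) (η₁ η₂ : Finset X) (hdisj : Disjoint η₁ η₂) :
    Rplus rp γp γm (η₁ ∪ η₂) = Rplus rp γp γm η₁ * Rplus rp (γp ∪ ↑η₁) γm η₂ := by
  have hrp : PartialCocycle rp γm := fun γ => hCCIp γ γm
  have hη₁ : {a | a ∈ η₁.toList} = (η₁ : Set X) := by ext; simp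
  unfold Rplus
  rw [hrp.RplusL_perm (Finset.toList_union_perm hdisj), RplusL_append, hη₁]
end

section
/- Let r⁺, r⁻ satisfy the partial cocycle identities (CCI⁺), (CCI⁻) and the balance identity (Bal). Then for all configurations γ⁺, γ⁻ ⊆ X and all x, x', y ∈ X the following chain of equalities holds: r⁺(γ⁺∪x, γ⁻∪y, x')·r(γ⁺, γ⁻, x, y) = r(γ⁺∪x, γ⁻, x', y)·r⁺(γ⁺, γ⁻, x) = r(γ⁺∪x', γ⁻, x, y)·r⁺(γ⁺, γ⁻, x') = r⁺(γ⁺∪x', γ⁻∪y, x)·r(γ⁺, γ⁻, x', y). -/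
/-! By (Bal), `r(γ⁺∪x, γ⁻, x', y)·r⁺(γ⁺, γ⁻, x) = r⁺(γ⁺∪x, γ⁻∪y, x')·r⁺(γ⁺, γ⁻∪y, x)·r⁻(γ⁺, γ⁻, y)`,
which is the left end of the chain; swapping `x` and `x'` gives the right end, and the triple
product is symmetric in `x, x'` by (CCI⁺) at `γ⁻∪y`. -/

open scoped NNReal

/-- The relative energy density
`r(γ⁺, γ⁻, x, y) := r⁺(γ⁺, γ⁻∪y, x)·r⁻(γ⁺, γ⁻, y)`. -/
def relE {X : Type*} (rp rm : Set X → Set X → X → ℝ≥0)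
    (γp γm : Set X) (x y : X) : ℝ≥0 :=
  rp γp (insert y γm) x * rm γp γm y

section

variable {X : Type*} {rp rm : Set X → Set X → X → ℝ≥0}

theorem relE_insert_mul_of_balance
    (hBal : ∀ (γp γm : Set X) (x y : X),
      rp γp (insert y γm) x * rm γp γm y = rm (insert x γp) γm y * rp γp γm x)
    (γp γm : Set X) (x x' y : X) :
    relE rp rm (insert x γp) γm x' y * rp γp γm x
      = rp (insert x γp) (insert y γm) x' * relE rp rm γp γm x y := by
  rw [relE, relE, mul_assoc, hBal]

theorem relE_insert_mul_symm
    (hCCIp : ∀ (γp γm : Set X) (x x' : X),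
      rp (insert x' γp) γm x * rp γp γm x' = rp (insert x γp) γm x' * rp γp γm x)
    (hBal : ∀ (γp γm : Set X) (x y : X),
      rp γp (insert y γm) x * rm γp γm y = rm (insert x γp) γm y * rp γp γm x)
    (γp γm : Set X) (x x' y : X) :
    relE rp rm (insert x γp) γm x' y * rp γp γm x
      = relE rp rm (insert x' γp) γm x y * rp γp γm x' := by
  rw [relE_insert_mul_of_balance hBal, relE_insert_mul_of_balance hBal, relE, relE,
    ← mul_assoc, ← mul_assoc, hCCIp γp (insert y γm) x' x]

end

theorem relE_chain_plus_general {X : Type*}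
    (rp rm : Set X → Set X → X → ℝ≥0)
    (hCCIp : ∀ (γp γm : Set X) (x x' : X),
      rp (insert x' γp) γm x * rp γp γm x' = rp (insert x γp) γm x' * rp γp γm x)
    (hBal : ∀ (γp γm : Set X) (x y : X),
      rp γp (insert y γm) x * rm γp γm y = rm (insert x γp) γm y * rp γp γm x)
    (γp γm : Set X) (x x' y : X) :
    rp (insert x γp) (insert y γm) x' * relE rp rm γp γm x y
        = relE rp rm (insert x γp) γm x' y * rp γp γm x
      ∧ relE rp rm (insert x γp) γm x' y * rp γp γm x
        = relE rp rm (insert x' γp) γm x y * rp γp γm x'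
      ∧ relE rp rm (insert x' γp) γm x y * rp γp γm x'
        = rp (insert x' γp) (insert y γm) x * relE rp rm γp γm x' y :=
  ⟨(relE_insert_mul_of_balance hBal γp γm x x' y).symm,
    relE_insert_mul_symm hCCIp hBal γp γm x x' y,
    relE_insert_mul_of_balance hBal γp γm x' x y⟩

/-- Under (CCI⁺), (CCI⁻) and the balance identity (Bal), the chain of equalities
`r⁺(γ⁺∪x, γ⁻∪y, x')·r(γ⁺, γ⁻, x, y) = r(γ⁺∪x, γ⁻, x', y)·r⁺(γ⁺, γ⁻, x)
 = r(γ⁺∪x', γ⁻, x, y)·r⁺(γ⁺, γ⁻, x') = r⁺(γ⁺∪x', γ⁻∪y, x)·r(γ⁺, γ⁻, x', y)`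
holds. -/
theorem relE_chain_plus {X : Type*}
    (rp rm : Set X → Set X → X → ℝ≥0)
    (hCCIp : ∀ (γp γm : Set X) (x x' : X),
      rp (insert x' γp) γm x * rp γp γm x' = rp (insert x γp) γm x' * rp γp γm x)
    (hCCIm : ∀ (γp γm : Set X) (y y' : X),
      rm γp (insert y' γm) y * rm γp γm y' = rm γp (insert y γm) y' * rm γp γm y)
    (hBal : ∀ (γp γm : Set X) (x y : X),
      rp γp (insert y γm) x * rm γp γm y = rm (insert x γp) γm y * rp γp γm x)
    (γp γm : Set X) (x x' y : X) :
    rp (insert x γp) (insert y γm) x' * relE rp rm γp γm x y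
        = relE rp rm (insert x γp) γm x' y * rp γp γm x
      ∧ relE rp rm (insert x γp) γm x' y * rp γp γm x
        = relE rp rm (insert x' γp) γm x y * rp γp γm x'
      ∧ relE rp rm (insert x' γp) γm x y * rp γp γm x'
        = rp (insert x' γp) (insert y γm) x * relE rp rm γp γm x' y :=
  relE_chain_plus_general rp rm hCCIp hBal γp γm x x' y
end

section
/- Let r⁺, r⁻ satisfy the partial cocycle identities (CCI⁺), (CCI⁻) and the balance identity (Bal). Then for all configurations γ⁺, γ⁻ ⊆ X and all x, y, y' ∈ X the following chain of equalities holds: r⁻(γ⁺∪x, γ⁻∪y, y')·r(γ⁺, γ⁻, x, y) = r(γ⁺, γ⁻∪y, x, y')·r⁻(γ⁺, γ⁻, y) = r(γ⁺, γ⁻∪y', x, y)·r⁻(γ⁺, γ⁻, y') = r⁻(γ⁺∪x, γ⁻∪y', y)·r(γ⁺, γ⁻, x, y'). -/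
/-!
The two outer equalities are the balance identity at `γ⁻ ∪ y` (resp. `γ⁻ ∪ y'`), regrouped;
the middle one is the cocycle identity (CCI⁻) at `γ⁻` once the two insertions into `γ⁻` commute.
-/

open scoped NNReal

section

variable {X : Type*} (rp rm : Set X → Set X → X → ℝ≥0)

theorem rm_insert_mul_relE
    (hBal : ∀ (γp γm : Set X) (x y : X),
      rp γp (insert y γm) x * rm γp γm y = rm (insert x γp) γm y * rp γp γm x)
    (γp γm : Set X) (x y y' : X) :
    rm (insert x γp) (insert y γm) y' * relE rp rm γp γm x y
      = relE rp rm γp (insert y γm) x y' * rm γp γm y := by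
  rw [relE, relE, hBal γp (insert y γm) x y', mul_assoc]

theorem relE_insert_mul_rm_comm
    (hCCIm : ∀ (γp γm : Set X) (y y' : X),
      rm γp (insert y' γm) y * rm γp γm y' = rm γp (insert y γm) y' * rm γp γm y)
    (γp γm : Set X) (x y y' : X) :
    relE rp rm γp (insert y γm) x y' * rm γp γm y
      = relE rp rm γp (insert y' γm) x y * rm γp γm y' := by
  rw [relE, relE, mul_assoc, hCCIm γp γm y' y, Set.insert_comm, mul_assoc]

end

theorem relE_chain_minus_general {X : Type*}
    (rp rm : Set X → Set X → X → ℝ≥0)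
    (hCCIm : ∀ (γp γm : Set X) (y y' : X),
      rm γp (insert y' γm) y * rm γp γm y' = rm γp (insert y γm) y' * rm γp γm y)
    (hBal : ∀ (γp γm : Set X) (x y : X),
      rp γp (insert y γm) x * rm γp γm y = rm (insert x γp) γm y * rp γp γm x)
    (γp γm : Set X) (x y y' : X) :
    rm (insert x γp) (insert y γm) y' * relE rp rm γp γm x y
        = relE rp rm γp (insert y γm) x y' * rm γp γm y
      ∧ relE rp rm γp (insert y γm) x y' * rm γp γm y
        = relE rp rm γp (insert y' γm) x y * rm γp γm y'
      ∧ relE rp rm γp (insert y' γm) x y * rm γp γm y'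
        = rm (insert x γp) (insert y' γm) y * relE rp rm γp γm x y' :=
  ⟨rm_insert_mul_relE rp rm hBal γp γm x y y',
    relE_insert_mul_rm_comm rp rm hCCIm γp γm x y y',
    (rm_insert_mul_relE rp rm hBal γp γm x y' y).symm⟩

/-- Under (CCI⁺), (CCI⁻) and the balance identity (Bal), the chain of equalities
`r⁻(γ⁺∪x, γ⁻∪y, y')·r(γ⁺, γ⁻, x, y) = r(γ⁺, γ⁻∪y, x, y')·r⁻(γ⁺, γ⁻, y)
 = r(γ⁺, γ⁻∪y', x, y)·r⁻(γ⁺, γ⁻, y') = r⁻(γ⁺∪x, γ⁻∪y', y)·r(γ⁺, γ⁻, x, y')`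
holds. -/
theorem relE_chain_minus {X : Type*}
    (rp rm : Set X → Set X → X → ℝ≥0)
    (hCCIp : ∀ (γp γm : Set X) (x x' : X),
      rp (insert x' γp) γm x * rp γp γm x' = rp (insert x γp) γm x' * rp γp γm x)
    (hCCIm : ∀ (γp γm : Set X) (y y' : X),
      rm γp (insert y' γm) y * rm γp γm y' = rm γp (insert y γm) y' * rm γp γm y)
    (hBal : ∀ (γp γm : Set X) (x y : X),
      rp γp (insert y γm) x * rm γp γm y = rm (insert x γp) γm y * rp γp γm x)
    (γp γm : Set X) (x y y' : X) :
    rm (insert x γp) (insert y γm) y' * relE rp rm γp γm x y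
        = relE rp rm γp (insert y γm) x y' * rm γp γm y
      ∧ relE rp rm γp (insert y γm) x y' * rm γp γm y
        = relE rp rm γp (insert y' γm) x y * rm γp γm y'
      ∧ relE rp rm γp (insert y' γm) x y * rm γp γm y'
        = rm (insert x γp) (insert y' γm) y * relE rp rm γp γm x y' :=
  relE_chain_minus_general rp rm hCCIm hBal γp γm x y y'
end

section
/- Let r⁺, r⁻ satisfy the partial cocycle identities (CCI⁺), (CCI⁻) and the balance identity (Bal). Then the relative energy density r satisfies the cocycle identity: for all configurations γ⁺, γ⁻ ⊆ X and all x, x', y, y' ∈ X, r(γ⁺∪x', γ⁻∪y', x, y)·r(γ⁺, γ⁻, x', y') = r(γ⁺∪x, γ⁻∪y, x', y')·r(γ⁺, γ⁻, x, y). -/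
/-! Balance lets `r⁻(γ⁺∪x', ·, y)` trade places with `r⁺(γ⁺, ·, x')`, so that the two-step
product `r(γ⁺∪x', γ⁻∪y', x, y)·r(γ⁺, γ⁻, x', y')` splits into a pure `r⁺` factor and a pure
`r⁻` factor. Each factor is symmetric under swapping the two steps by (CCI⁺) resp. (CCI⁻). -/

open scoped NNReal

theorem two_step_split_of_balance {X M : Type*} [CommMonoid M] (rp rm : Set X → Set X → X → M)
    (hBal : ∀ (γp γm : Set X) (x y : X),
      rp γp (insert y γm) x * rm γp γm y = rm (insert x γp) γm y * rp γp γm x)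
    (γp γm : Set X) (x x' y y' : X) :
    rp (insert x' γp) (insert y (insert y' γm)) x * rm (insert x' γp) (insert y' γm) y *
        (rp γp (insert y' γm) x' * rm γp γm y')
      = rp (insert x' γp) (insert y (insert y' γm)) x * rp γp (insert y (insert y' γm)) x' *
        (rm γp (insert y' γm) y * rm γp γm y') := by
  calc _ = rp (insert x' γp) (insert y (insert y' γm)) x *
          (rm (insert x' γp) (insert y' γm) y * rp γp (insert y' γm) x') * rm γp γm y' := by
        ac_rfl
    _ = rp (insert x' γp) (insert y (insert y' γm)) x *
          (rp γp (insert y (insert y' γm)) x' * rm γp (insert y' γm) y) * rm γp γm y' := by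
        rw [hBal]
    _ = _ := by ac_rfl

/-- Under (CCI⁺), (CCI⁻) and the balance identity (Bal), the relative energy
density `r` satisfies the cocycle identity:
`r(γ⁺∪x', γ⁻∪y', x, y)·r(γ⁺, γ⁻, x', y') = r(γ⁺∪x, γ⁻∪y, x', y')·r(γ⁺, γ⁻, x, y)`. -/
theorem relE_cocycle {X : Type*}
    (rp rm : Set X → Set X → X → ℝ≥0)
    (hCCIp : ∀ (γp γm : Set X) (x x' : X),
      rp (insert x' γp) γm x * rp γp γm x' = rp (insert x γp) γm x' * rp γp γm x)
    (hCCIm : ∀ (γp γm : Set X) (y y' : X),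
      rm γp (insert y' γm) y * rm γp γm y' = rm γp (insert y γm) y' * rm γp γm y)
    (hBal : ∀ (γp γm : Set X) (x y : X),
      rp γp (insert y γm) x * rm γp γm y = rm (insert x γp) γm y * rp γp γm x)
    (γp γm : Set X) (x x' y y' : X) :
    relE rp rm (insert x' γp) (insert y' γm) x y * relE rp rm γp γm x' y'
      = relE rp rm (insert x γp) (insert y γm) x' y' * relE rp rm γp γm x y := by
  simp only [relE]
  rw [two_step_split_of_balance rp rm hBal γp γm x x' y y',
    two_step_split_of_balance rp rm hBal γp γm x' x y' y, Set.insert_comm y' y γm,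
    hCCIp γp (insert y (insert y' γm)) x x', hCCIm γp γm y y']
end

section
/- Let r⁺, r⁻ satisfy the partial cocycle identities (CCI⁺), (CCI⁻) and the balance identity (Bal). Then for all configurations γ⁺, γ⁻ ⊆ X, every finite configuration η⁺, and every y ∈ X: R⁺(γ⁺, γ⁻∪y, η⁺)·r⁻(γ⁺, γ⁻, y) = r⁻(γ⁺∪η⁺, γ⁻, y)·R⁺(γ⁺, γ⁻, η⁺). -/
/-! Push `r⁻(·, γ⁻, y)` through the product defining `R⁺`, one factor at a time: each
exchange of `r⁻` with a factor `r⁺(γ⁺ ∪ {x₁, …, xᵢ₋₁}, ·, xᵢ)` is one instance of (Bal). -/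

open scoped NNReal

theorem RplusL_insert_mul {X : Type*} {rp rm : Set X → Set X → X → ℝ≥0}
    (hBal : ∀ (γp γm : Set X) (x y : X),
      rp γp (insert y γm) x * rm γp γm y = rm (insert x γp) γm y * rp γp γm x)
    (γm : Set X) (y : X) (l : List X) (γp : Set X) :
    RplusL rp (insert y γm) γp l * rm γp γm y
      = rm (γp ∪ {a | a ∈ l}) γm y * RplusL rp γm γp l := by
  induction l generalizing γp with
  | nil => simp [RplusL]
  | cons x xs ih =>
    have hγ : insert x γp ∪ {a | a ∈ xs} = γp ∪ {a | a ∈ x :: xs} := by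
      ext; simp only [Set.mem_union, Set.mem_insert_iff, Set.mem_ofPred_eq, List.mem_cons]; tauto
    calc RplusL rp (insert y γm) γp (x :: xs) * rm γp γm y
        = RplusL rp (insert y γm) (insert x γp) xs * (rp γp (insert y γm) x * rm γp γm y) := by
          rw [RplusL]; ring
      _ = RplusL rp (insert y γm) (insert x γp) xs * rm (insert x γp) γm y * rp γp γm x := by
          rw [hBal]; ring
      _ = rm (γp ∪ {a | a ∈ x :: xs}) γm y * RplusL rp γm γp (x :: xs) := by
          rw [ih, hγ, RplusL]; ring

theorem Rplus_balance_point_general {X : Type*}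
    (rp rm : Set X → Set X → X → ℝ≥0)
    (hBal : ∀ (γp γm : Set X) (x y : X),
      rp γp (insert y γm) x * rm γp γm y = rm (insert x γp) γm y * rp γp γm x)
    (γp γm : Set X) (ηp : Finset X) (y : X) :
    Rplus rp γp (insert y γm) ηp * rm γp γm y
      = rm (γp ∪ ↑ηp) γm y * Rplus rp γp γm ηp := by
  simpa [Rplus] using RplusL_insert_mul hBal γm y ηp.toList γp

/-- Under (CCI⁺), (CCI⁻) and the balance identity (Bal), for all configurations
`γ⁺, γ⁻`, every finite configuration `η⁺` and every point `y`:
`R⁺(γ⁺, γ⁻∪y, η⁺)·r⁻(γ⁺, γ⁻, y) = r⁻(γ⁺∪η⁺, γ⁻, y)·R⁺(γ⁺, γ⁻, η⁺)`. -/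
theorem Rplus_balance_point {X : Type*}
    (rp rm : Set X → Set X → X → ℝ≥0)
    (hCCIp : ∀ (γp γm : Set X) (x x' : X),
      rp (insert x' γp) γm x * rp γp γm x' = rp (insert x γp) γm x' * rp γp γm x)
    (hCCIm : ∀ (γp γm : Set X) (y y' : X),
      rm γp (insert y' γm) y * rm γp γm y' = rm γp (insert y γm) y' * rm γp γm y)
    (hBal : ∀ (γp γm : Set X) (x y : X),
      rp γp (insert y γm) x * rm γp γm y = rm (insert x γp) γm y * rp γp γm x)
    (γp γm : Set X) (ηp : Finset X) (y : X) :
    Rplus rp γp (insert y γm) ηp * rm γp γm y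
      = rm (γp ∪ ↑ηp) γm y * Rplus rp γp γm ηp :=
  Rplus_balance_point_general rp rm hBal γp γm ηp y
end

section
/- Let r⁺, r⁻ satisfy the partial cocycle identities (CCI⁺), (CCI⁻) and the balance identity (Bal). Then for all configurations γ⁺, γ⁻ ⊆ X and all finite configurations η⁺, η⁻ the balance identity for R± holds: R⁺(γ⁺, γ⁻∪η⁻, η⁺)·R⁻(γ⁺, γ⁻, η⁻) = R⁻(γ⁺∪η⁺, γ⁻, η⁻)·R⁺(γ⁺, γ⁻, η⁺). -/
open scoped NNReal

/-- Iterated product of the partial relative energy density `r⁻` along an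
enumeration (list) of a finite configuration. -/
def RminusL {X : Type*} (rm : Set X → Set X → X → ℝ≥0) (γp : Set X) :
    Set X → List X → ℝ≥0
  | _, [] => 1
  | γm, y :: ys => rm γp γm y * RminusL rm γp (insert y γm) ys

/-- `R⁻(γ⁺, γ⁻, η⁻)`: the iterated product of `r⁻` along a (fixed, arbitrary)
duplicate-free enumeration of the finite configuration `η⁻`; under (CCI⁻) it is
independent of the enumeration. -/
noncomputable def Rminus {X : Type*} (rm : Set X → Set X → X → ℝ≥0)
    (γp γm : Set X) (η : Finset X) : ℝ≥0 :=
  RminusL rm γp γm η.toList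

/-! Both sides are products along fixed enumerations of `η⁺` and `η⁻`. One application of (Bal)
swaps a factor `r⁻(·, ·, y)` past a factor `r⁺(·, ·, x)`, so an induction along the enumeration of
`η⁺` moves a single point `y` of `η⁻` through all of `R⁺`, and an induction along the enumeration
of `η⁻` then moves all of them. -/

section Balance

variable {X : Type*} (rp rm : Set X → Set X → X → ℝ≥0)

def BalanceIdentity : Prop :=
  ∀ (γp γm : Set X) (x y : X),
    rp γp (insert y γm) x * rm γp γm y = rm (insert x γp) γm y * rp γp γm x

variable {rp rm}

theorem Set.union_setOf_mem_cons (γ : Set X) (x : X) (l : List X) :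
    γ ∪ {z | z ∈ x :: l} = insert x γ ∪ {z | z ∈ l} := by
  ext z
  simp only [Set.mem_union, Set.mem_insert_iff, Set.mem_ofPred_eq, List.mem_cons]
  tauto

theorem RplusL_insert_mul_of_balance (hBal : BalanceIdentity rp rm) (γm : Set X) (y : X) :
    ∀ (xs : List X) (γp : Set X), RplusL rp (insert y γm) γp xs * rm γp γm y
      = rm (γp ∪ {x | x ∈ xs}) γm y * RplusL rp γm γp xs
  | [], γp => by simp [RplusL]
  | x :: xs, γp => by
    calc RplusL rp (insert y γm) γp (x :: xs) * rm γp γm y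
        = RplusL rp (insert y γm) (insert x γp) xs * (rp γp (insert y γm) x * rm γp γm y) := by
          rw [RplusL]; ring
      _ = RplusL rp (insert y γm) (insert x γp) xs * rm (insert x γp) γm y * rp γp γm x := by
          rw [hBal, mul_assoc]
      _ = rm (γp ∪ {z | z ∈ x :: xs}) γm y * RplusL rp γm γp (x :: xs) := by
          rw [RplusL_insert_mul_of_balance hBal γm y xs, Set.union_setOf_mem_cons, RplusL]; ring

theorem RplusL_mul_RminusL_of_balance (hBal : BalanceIdentity rp rm) (γp : Set X) (xs : List X) :
    ∀ (ys : List X) (γm : Set X),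
    RplusL rp (γm ∪ {y | y ∈ ys}) γp xs * RminusL rm γp γm ys
      = RminusL rm (γp ∪ {x | x ∈ xs}) γm ys * RplusL rp γm γp xs
  | [], γm => by simp [RminusL]
  | y :: ys, γm => by
    calc RplusL rp (γm ∪ {z | z ∈ y :: ys}) γp xs * RminusL rm γp γm (y :: ys)
        = RplusL rp (insert y γm ∪ {z | z ∈ ys}) γp xs * RminusL rm γp (insert y γm) ys
            * rm γp γm y := by
          rw [Set.union_setOf_mem_cons, RminusL]; ring
      _ = RminusL rm (γp ∪ {x | x ∈ xs}) (insert y γm) ys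
            * (RplusL rp (insert y γm) γp xs * rm γp γm y) := by
          rw [RplusL_mul_RminusL_of_balance hBal γp xs ys, mul_assoc]
      _ = RminusL rm (γp ∪ {x | x ∈ xs}) γm (y :: ys) * RplusL rp γm γp xs := by
          rw [RplusL_insert_mul_of_balance hBal, RminusL]; ring

end Balance

theorem R_balance_general {X : Type*}
    (rp rm : Set X → Set X → X → ℝ≥0)
    (hBal : ∀ (γp γm : Set X) (x y : X),
      rp γp (insert y γm) x * rm γp γm y = rm (insert x γp) γm y * rp γp γm x)
    (γp γm : Set X) (ηp ηm : Finset X) :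
    Rplus rp γp (γm ∪ ↑ηm) ηp * Rminus rm γp γm ηm
      = Rminus rm (γp ∪ ↑ηp) γm ηm * Rplus rp γp γm ηp := by
  have hcoe (η : Finset X) : (η : Set X) = {x | x ∈ η.toList} := by
    ext; simp
  rw [Rplus, Rplus, Rminus, Rminus, hcoe ηm, hcoe ηp]
  exact RplusL_mul_RminusL_of_balance hBal γp ηp.toList ηm.toList γm

/-- Under (CCI⁺), (CCI⁻) and the balance identity (Bal), for all configurations
`γ⁺, γ⁻` and all finite configurations `η⁺, η⁻` the balance identity for `R±`
holds: `R⁺(γ⁺, γ⁻∪η⁻, η⁺)·R⁻(γ⁺, γ⁻, η⁻) = R⁻(γ⁺∪η⁺, γ⁻, η⁻)·R⁺(γ⁺, γ⁻, η⁺)`. -/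
theorem R_balance {X : Type*}
    (rp rm : Set X → Set X → X → ℝ≥0)
    (hCCIp : ∀ (γp γm : Set X) (x x' : X),
      rp (insert x' γp) γm x * rp γp γm x' = rp (insert x γp) γm x' * rp γp γm x)
    (hCCIm : ∀ (γp γm : Set X) (y y' : X),
      rm γp (insert y' γm) y * rm γp γm y' = rm γp (insert y γm) y' * rm γp γm y)
    (hBal : ∀ (γp γm : Set X) (x y : X),
      rp γp (insert y γm) x * rm γp γm y = rm (insert x γp) γm y * rp γp γm x)
    (γp γm : Set X) (ηp ηm : Finset X) :
    Rplus rp γp (γm ∪ ↑ηm) ηp * Rminus rm γp γm ηm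
      = Rminus rm (γp ∪ ↑ηp) γm ηm * Rplus rp γp γm ηp :=
  R_balance_general rp rm hBal γp γm ηp ηm
end

section
/- Let r⁺, r⁻ satisfy the partial cocycle identities (CCI⁺), (CCI⁻) and the balance identity (Bal). Then for all configurations γ⁺, γ⁻ ⊆ X, every finite configuration η⁺, and all disjoint finite configurations η₁⁻, η₂⁻: R(γ⁺, γ⁻, η⁺, η₁⁻ ∪ η₂⁻) = R(γ⁺, γ⁻∪η₂⁻, η⁺, η₁⁻)·R⁻(γ⁺, γ⁻, η₂⁻). -/
open scoped NNReal

/-- `R(γ⁺, γ⁻, η⁺, η⁻) := R⁺(γ⁺, γ⁻∪η⁻, η⁺)·R⁻(γ⁺, γ⁻, η⁻)`. -/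
noncomputable def Rfull {X : Type*} (rp rm : Set X → Set X → X → ℝ≥0)
    (γp γm : Set X) (ηp ηm : Finset X) : ℝ≥0 :=
  Rplus rp γp (γm ∪ ↑ηm) ηp * Rminus rm γp γm ηm

/-!
Only the `R⁻` factors carry content. By (CCI⁻) the product `R⁻` does not depend on the
enumeration, so enumerating `η₁⁻ ∪ η₂⁻` as `η₂⁻` followed by `η₁⁻` splits it as
`R⁻(γ⁺, γ⁻, η₂⁻) · R⁻(γ⁺, γ⁻ ∪ η₂⁻, η₁⁻)`; the `R⁺` factors coincide because
`γ⁻ ∪ (η₁⁻ ∪ η₂⁻) = (γ⁻ ∪ η₂⁻) ∪ η₁⁻`.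
-/

section RminusL

variable {X : Type*} (rm : Set X → Set X → X → ℝ≥0)

lemma RminusL_append (γp : Set X) (l₁ l₂ : List X) (γm : Set X) :
    RminusL rm γp γm (l₁ ++ l₂)
      = RminusL rm γp γm l₁ * RminusL rm γp (γm ∪ {a | a ∈ l₁}) l₂ := by
  induction l₁ generalizing γm with
  | nil => simp [RminusL]
  | cons x t ih =>
      have hset : insert x γm ∪ {a | a ∈ t} = γm ∪ {a | a ∈ x :: t} := by
        ext a; simp [or_assoc, or_left_comm]
      rw [List.cons_append, RminusL, ih, hset, RminusL, mul_assoc]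

variable {rm}
  (hCCIm : ∀ (γp γm : Set X) (y y' : X),
    rm γp (insert y' γm) y * rm γp γm y' = rm γp (insert y γm) y' * rm γp γm y)
include hCCIm

lemma RminusL_perm (γp : Set X) {l l' : List X} (h : l.Perm l') (γm : Set X) :
    RminusL rm γp γm l = RminusL rm γp γm l' := by
  induction h generalizing γm with
  | nil => rfl
  | cons a _ ih => simp only [RminusL, ih]
  | swap a b t =>
      simp only [RminusL, ← mul_assoc]
      rw [mul_comm (rm γp γm b), hCCIm, mul_comm (rm γp (insert a γm) b), Set.insert_comm]
  | trans _ _ ih₁ ih₂ => rw [ih₁, ih₂]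

lemma Rminus_union [DecidableEq X] (γp γm : Set X) {η₁ η₂ : Finset X}
    (hdisj : Disjoint η₁ η₂) :
    Rminus rm γp γm (η₁ ∪ η₂) = Rminus rm γp γm η₂ * Rminus rm γp (γm ∪ ↑η₂) η₁ := by
  have hperm : (η₁ ∪ η₂).toList.Perm (η₂.toList ++ η₁.toList) := by
    refine (List.perm_ext_iff_of_nodup (Finset.nodup_toList _) ?_).2 fun a => ?_
    · exact List.nodup_append.2 ⟨Finset.nodup_toList _, Finset.nodup_toList _,
        fun a ha b hb hab => Finset.disjoint_left.1 hdisj (hab ▸ Finset.mem_toList.1 hb)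
          (Finset.mem_toList.1 ha)⟩
    · simp [or_comm]
  rw [Rminus, RminusL_perm hCCIm γp hperm, RminusL_append]
  simp only [Finset.mem_toList, Finset.setOfPred_mem, Rminus]

end RminusL

theorem R_union_minus_general {X : Type*} [DecidableEq X]
    (rp rm : Set X → Set X → X → ℝ≥0)
    (hCCIm : ∀ (γp γm : Set X) (y y' : X),
      rm γp (insert y' γm) y * rm γp γm y' = rm γp (insert y γm) y' * rm γp γm y)
    (γp γm : Set X) (ηp η₁ η₂ : Finset X) (hdisj : Disjoint η₁ η₂) :
    Rfull rp rm γp γm ηp (η₁ ∪ η₂)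
      = Rfull rp rm γp (γm ∪ ↑η₂) ηp η₁ * Rminus rm γp γm η₂ := by
  have hconf : γm ∪ ↑(η₁ ∪ η₂) = γm ∪ ↑η₂ ∪ ↑η₁ := by
    rw [Finset.coe_union, Set.union_comm (η₁ : Set X), Set.union_assoc]
  rw [Rfull, Rfull, Rminus_union hCCIm γp γm hdisj, hconf]
  ring

/-- Under (CCI⁺), (CCI⁻) and the balance identity (Bal), for all configurations
`γ⁺, γ⁻`, every finite configuration `η⁺` and all disjoint finite
configurations `η₁⁻, η₂⁻`:
`R(γ⁺, γ⁻, η⁺, η₁⁻ ∪ η₂⁻) = R(γ⁺, γ⁻∪η₂⁻, η⁺, η₁⁻)·R⁻(γ⁺, γ⁻, η₂⁻)`. -/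
theorem R_union_minus {X : Type*} [DecidableEq X]
    (rp rm : Set X → Set X → X → ℝ≥0)
    (hCCIp : ∀ (γp γm : Set X) (x x' : X),
      rp (insert x' γp) γm x * rp γp γm x' = rp (insert x γp) γm x' * rp γp γm x)
    (hCCIm : ∀ (γp γm : Set X) (y y' : X),
      rm γp (insert y' γm) y * rm γp γm y' = rm γp (insert y γm) y' * rm γp γm y)
    (hBal : ∀ (γp γm : Set X) (x y : X),
      rp γp (insert y γm) x * rm γp γm y = rm (insert x γp) γm y * rp γp γm x)
    (γp γm : Set X) (ηp η₁ η₂ : Finset X) (hdisj : Disjoint η₁ η₂) :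
    Rfull rp rm γp γm ηp (η₁ ∪ η₂)
      = Rfull rp rm γp (γm ∪ ↑η₂) ηp η₁ * Rminus rm γp γm η₂ :=
  R_union_minus_general rp rm hCCIm γp γm ηp η₁ η₂ hdisj
end

section
/- Let r⁺, r⁻ satisfy the partial cocycle identities (CCI⁺), (CCI⁻) and the balance identity (Bal). Let η⁺ and η⁻ be finite configurations with |η⁺| = |η⁻| = n, with duplicate-free enumerations η⁺ = (x₁, …, xₙ) and η⁻ = (y₁, …, yₙ). Then for all configurations γ⁺, γ⁻ ⊆ X: R(γ⁺, γ⁻, η⁺, η⁻) = r(γ⁺, γ⁻, x₁, y₁)·r(γ⁺∪{x₁}, γ⁻∪{y₁}, x₂, y₂)·r(γ⁺∪{x₁,x₂}, γ⁻∪{y₁,y₂}, x₃, y₃)·…·r(γ⁺∪{x₁,…,x_{n−1}}, γ⁻∪{y₁,…,y_{n−1}}, xₙ, yₙ). -/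
/-!
By (CCI⁺) and (CCI⁻) the products `R⁺`, `R⁻` may be computed along the given enumerations.
Iterating (Bal) gives `r⁺(γ⁺, γ⁻ ∪ η, x)·R⁻(γ⁺, γ⁻, η) = R⁻(γ⁺ ∪ x, γ⁻, η)·r⁺(γ⁺, γ⁻, x)`.
Applied to `γ⁻ ∪ y₁` and `η = {y₂, …, yₙ}`, it splits `r(γ⁺, γ⁻, x₁, y₁)` off `R(γ⁺, γ⁻, η⁺, η⁻)`,
leaving `R(γ⁺ ∪ x₁, γ⁻ ∪ y₁, η⁺ ∖ x₁, η⁻ ∖ y₁)`, and induction finishes.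
-/

open scoped NNReal

/-- The chain product
`r(γ⁺, γ⁻, x₁, y₁)·r(γ⁺∪{x₁}, γ⁻∪{y₁}, x₂, y₂)·…·
 r(γ⁺∪{x₁,…,x_{n−1}}, γ⁻∪{y₁,…,y_{n−1}}, xₙ, yₙ)`
along two enumerations. -/
def relChain {X : Type*} (rp rm : Set X → Set X → X → ℝ≥0) :
    Set X → Set X → List X → List X → ℝ≥0
  | _, _, [], _ => 1
  | _, _, _ :: _, [] => 1
  | γp, γm, x :: xs, y :: ys =>
      relE rp rm γp γm x y * relChain rp rm (insert x γp) (insert y γm) xs ys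

section

variable {X : Type*}

theorem RplusL_perm_s11 {rp : Set X → Set X → X → ℝ≥0} {γm : Set X}
    (hCCIp : ∀ (γp : Set X) (x x' : X),
      rp (insert x' γp) γm x * rp γp γm x' = rp (insert x γp) γm x' * rp γp γm x)
    {xs xs' : List X} (h : xs.Perm xs') (γp : Set X) :
    RplusL rp γm γp xs = RplusL rp γm γp xs' := by
  induction h generalizing γp with
  | nil => rfl
  | cons x _ ih => simp only [RplusL, ih]
  | swap x y l =>
    simp only [RplusL, Set.insert_comm x y, ← mul_assoc]
    rw [mul_comm (rp γp γm y), hCCIp, mul_comm (rp (insert x γp) γm y)]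
  | trans _ _ ih₁ ih₂ => rw [ih₁, ih₂]

theorem RminusL_eq_RplusL (rm : Set X → Set X → X → ℝ≥0) (γp γm : Set X) (ys : List X) :
    RminusL rm γp γm ys = RplusL (fun γ _ => rm γp γ) ∅ γm ys := by
  induction ys generalizing γm with
  | nil => rfl
  | cons y ys ih => simp only [RminusL, RplusL, ih]

theorem RminusL_perm_s11 {rm : Set X → Set X → X → ℝ≥0} {γp : Set X}
    (hCCIm : ∀ (γm : Set X) (y y' : X),
      rm γp (insert y' γm) y * rm γp γm y' = rm γp (insert y γm) y' * rm γp γm y)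
    {ys ys' : List X} (h : ys.Perm ys') (γm : Set X) :
    RminusL rm γp γm ys = RminusL rm γp γm ys' := by
  simp only [RminusL_eq_RplusL]
  exact RplusL_perm_s11 hCCIm h γm

theorem Rplus_toFinset [DecidableEq X] {rp : Set X → Set X → X → ℝ≥0} {γm : Set X}
    (hCCIp : ∀ (γp : Set X) (x x' : X),
      rp (insert x' γp) γm x * rp γp γm x' = rp (insert x γp) γm x' * rp γp γm x)
    (γp : Set X) {xs : List X} (hx : xs.Nodup) :
    Rplus rp γp γm xs.toFinset = RplusL rp γm γp xs :=
  RplusL_perm_s11 hCCIp (List.toFinset_toList hx) γp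

theorem Rminus_toFinset [DecidableEq X] {rm : Set X → Set X → X → ℝ≥0} {γp : Set X}
    (hCCIm : ∀ (γm : Set X) (y y' : X),
      rm γp (insert y' γm) y * rm γp γm y' = rm γp (insert y γm) y' * rm γp γm y)
    (γm : Set X) {ys : List X} (hy : ys.Nodup) :
    Rminus rm γp γm ys.toFinset = RminusL rm γp γm ys :=
  RminusL_perm_s11 hCCIm (List.toFinset_toList hy) γm

theorem union_toFinset_cons [DecidableEq X] (γ : Set X) (y : X) (ys : List X) :
    γ ∪ ↑(y :: ys).toFinset = insert y γ ∪ ↑ys.toFinset := by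
  rw [List.toFinset_cons, Finset.coe_insert, Set.union_insert, Set.insert_union]

variable [DecidableEq X] {rp rm : Set X → Set X → X → ℝ≥0}
  (hBal : ∀ (γp γm : Set X) (x y : X),
    rp γp (insert y γm) x * rm γp γm y = rm (insert x γp) γm y * rp γp γm x)
include hBal

theorem rp_union_mul_RminusL (γp γm : Set X) (x : X) (ys : List X) :
    rp γp (γm ∪ ↑ys.toFinset) x * RminusL rm γp γm ys =
      RminusL rm (insert x γp) γm ys * rp γp γm x := by
  induction ys generalizing γm with
  | nil => simp [RminusL]
  | cons y ys ih =>
    rw [union_toFinset_cons]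
    calc rp γp (insert y γm ∪ ↑ys.toFinset) x * (rm γp γm y * RminusL rm γp (insert y γm) ys)
        = rp γp (insert y γm ∪ ↑ys.toFinset) x * RminusL rm γp (insert y γm) ys
            * rm γp γm y := by ring
      _ = RminusL rm (insert x γp) (insert y γm) ys
            * (rp γp (insert y γm) x * rm γp γm y) := by rw [ih]; ring
      _ = rm (insert x γp) γm y * RminusL rm (insert x γp) (insert y γm) ys
            * rp γp γm x := by rw [hBal]; ring

theorem RplusL_mul_RminusL_eq_relChain {xs ys : List X} (hlen : xs.length = ys.length)
    (γp γm : Set X) :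
    RplusL rp (γm ∪ ↑ys.toFinset) γp xs * RminusL rm γp γm ys = relChain rp rm γp γm xs ys := by
  induction xs generalizing ys γp γm with
  | nil => simp [List.length_eq_zero_iff.mp hlen.symm, RplusL, RminusL, relChain]
  | cons x xs ih =>
    obtain _ | ⟨y, ys⟩ := ys
    · simp at hlen
    rw [union_toFinset_cons]
    calc rp γp (insert y γm ∪ ↑ys.toFinset) x
            * RplusL rp (insert y γm ∪ ↑ys.toFinset) (insert x γp) xs
            * (rm γp γm y * RminusL rm γp (insert y γm) ys)
        = rp γp (insert y γm ∪ ↑ys.toFinset) x * RminusL rm γp (insert y γm) ys * rm γp γm y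
            * RplusL rp (insert y γm ∪ ↑ys.toFinset) (insert x γp) xs := by ring
      _ = relE rp rm γp γm x y * (RplusL rp (insert y γm ∪ ↑ys.toFinset) (insert x γp) xs
            * RminusL rm (insert x γp) (insert y γm) ys) := by
        rw [rp_union_mul_RminusL hBal, relE]; ring
      _ = relChain rp rm γp γm (x :: xs) (y :: ys) := by
        rw [ih (Nat.succ_injective hlen)]; rfl

end

/-- Under (CCI⁺), (CCI⁻) and the balance identity (Bal), if `η⁺` and `η⁻` are
finite configurations of the same cardinality, with duplicate-free enumerations
`(x₁, …, xₙ)` and `(y₁, …, yₙ)`, then `R(γ⁺, γ⁻, η⁺, η⁻)` equals the chain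
product `r(γ⁺, γ⁻, x₁, y₁)·r(γ⁺∪{x₁}, γ⁻∪{y₁}, x₂, y₂)·…·
r(γ⁺∪{x₁,…,x_{n−1}}, γ⁻∪{y₁,…,y_{n−1}}, xₙ, yₙ)`. -/
theorem R_eq_relChain {X : Type*} [DecidableEq X]
    (rp rm : Set X → Set X → X → ℝ≥0)
    (hCCIp : ∀ (γp γm : Set X) (x x' : X),
      rp (insert x' γp) γm x * rp γp γm x' = rp (insert x γp) γm x' * rp γp γm x)
    (hCCIm : ∀ (γp γm : Set X) (y y' : X),
      rm γp (insert y' γm) y * rm γp γm y' = rm γp (insert y γm) y' * rm γp γm y)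
    (hBal : ∀ (γp γm : Set X) (x y : X),
      rp γp (insert y γm) x * rm γp γm y = rm (insert x γp) γm y * rp γp γm x)
    (γp γm : Set X) (xs ys : List X)
    (hx : xs.Nodup) (hy : ys.Nodup) (hlen : xs.length = ys.length) :
    Rfull rp rm γp γm xs.toFinset ys.toFinset = relChain rp rm γp γm xs ys := by
  rw [Rfull, Rplus_toFinset (hCCIp · _) γp hx, Rminus_toFinset (hCCIm γp) γm hy,
    RplusL_mul_RminusL_eq_relChain hBal hlen]
end

section
/- Let φ : X × X → ℝ be symmetric (φ(x,y) = φ(y,x) for all x, y), and let r₁, r₂ be functions assigning to a finite configuration γ and a point x ∈ X a value in [0, ∞), each satisfying the cocycle identity rᵢ(γ∪{x'}, x)·rᵢ(γ, x') = rᵢ(γ∪{x}, x')·rᵢ(γ, x) for all finite configurations γ and all x, x' ∈ X. Define r₀(γ, x) := exp(−∑_{y∈γ} φ(x,y)) for finite configurations γ, and set r⁺(γ⁺, γ⁻, x) := r₀(γ⁻, x)·r₁(γ⁺, x) and r⁻(γ⁺, γ⁻, y) := r₀(γ⁺, y)·r₂(γ⁻, y). Then r⁺ and r⁻ satisfy the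 partial cocycle identities (CCI⁺) and (CCI⁻) for all finite configurations γ⁺, γ⁻ and all points, and they satisfy the balance identity r⁺(γ⁺, γ⁻∪{y}, x)·r⁻(γ⁺, γ⁻, y) = r⁻(γ⁺∪{x}, γ⁻, y)·r⁺(γ⁺, γ⁻, x) for all finite configurations γ⁺, γ⁻ and all x ∉ γ⁺, y ∉ γ⁻. -/
/-!
Both partial cocycle identities hold because the interaction factor `r₀(γ⁻, x)` of `r⁺` does not
depend on `γ⁺` (and symmetrically for `r⁻`), and multiplying a cocycle by a factor depending only
on the point keeps it a cocycle. For the balance identity, adding `y ∉ γ⁻` to `γ⁻` multiplies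
`r₀(γ⁻, x)` by `exp (-φ x y)`, and adding `x ∉ γ⁺` to `γ⁺` multiplies `r₀(γ⁺, y)` by
`exp (-φ y x)`; these agree by the symmetry of `φ`.
-/

section

variable {X M : Type*} [DecidableEq X]

def IsCocycle [CommMonoid M] (r : Finset X → X → M) : Prop :=
  ∀ (γ : Finset X) (x x' : X), r (insert x' γ) x * r γ x' = r (insert x γ) x' * r γ x

theorem IsCocycle.mul_left [CommMonoid M] {r : Finset X → X → M} (hr : IsCocycle r)
    (c : X → M) : IsCocycle fun γ x => c x * r γ x := by
  intro γ x x'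
  calc c x * r (insert x' γ) x * (c x' * r γ x')
      = c x * c x' * (r (insert x' γ) x * r γ x') := by ac_rfl
    _ = c x * c x' * (r (insert x γ) x' * r γ x) := by rw [hr γ x x']
    _ = c x' * r (insert x γ) x' * (c x * r γ x) := by ac_rfl

theorem exp_neg_sum_insert (φ : X → X → ℝ) {γ : Finset X} {x y : X} (hy : y ∉ γ) :
    Real.exp (-∑ z ∈ insert y γ, φ x z) = Real.exp (-φ x y) * Real.exp (-∑ z ∈ γ, φ x z) := by
  rw [Finset.sum_insert hy, neg_add, Real.exp_add]

theorem exp_neg_sum_insert_balance {φ : X → X → ℝ} (hφ : ∀ x y, φ x y = φ y x)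
    {γp γm : Finset X} {x y : X} (hx : x ∉ γp) (hy : y ∉ γm) :
    Real.exp (-∑ z ∈ insert y γm, φ x z) * Real.exp (-∑ z ∈ γp, φ y z)
      = Real.exp (-∑ z ∈ insert x γp, φ y z) * Real.exp (-∑ z ∈ γm, φ x z) := by
  rw [exp_neg_sum_insert φ hy, exp_neg_sum_insert φ hx, hφ y x]
  ring

end

theorem pair_potential_perturbation_general {X : Type*} [DecidableEq X]
    (φ : X → X → ℝ) (hφ : ∀ x y, φ x y = φ y x)
    (r₁ r₂ : Finset X → X → ℝ)
    (hr₁cocycle : ∀ (γ : Finset X) (x x' : X),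
      r₁ (insert x' γ) x * r₁ γ x' = r₁ (insert x γ) x' * r₁ γ x)
    (hr₂cocycle : ∀ (γ : Finset X) (x x' : X),
      r₂ (insert x' γ) x * r₂ γ x' = r₂ (insert x γ) x' * r₂ γ x)
    (r₀ : Finset X → X → ℝ) (hr₀ : ∀ (γ : Finset X) (x : X),
      r₀ γ x = Real.exp (-(∑ y ∈ γ, φ x y)))
    (rp rm : Finset X → Finset X → X → ℝ)
    (hrp : ∀ (γp γm : Finset X) (x : X), rp γp γm x = r₀ γm x * r₁ γp x)
    (hrm : ∀ (γp γm : Finset X) (y : X), rm γp γm y = r₀ γp y * r₂ γm y) :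
    (∀ (γp γm : Finset X) (x x' : X),
      rp (insert x' γp) γm x * rp γp γm x' = rp (insert x γp) γm x' * rp γp γm x)
    ∧ (∀ (γp γm : Finset X) (y y' : X),
      rm γp (insert y' γm) y * rm γp γm y' = rm γp (insert y γm) y' * rm γp γm y)
    ∧ (∀ (γp γm : Finset X) (x y : X), x ∉ γp → y ∉ γm →
      rp γp (insert y γm) x * rm γp γm y = rm (insert x γp) γm y * rp γp γm x) := by
  refine ⟨fun γp γm x x' => ?_, fun γp γm y y' => ?_, fun γp γm x y hx hy => ?_⟩
  · simp only [hrp]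
    exact IsCocycle.mul_left hr₁cocycle (r₀ γm) γp x x'
  · simp only [hrm]
    exact IsCocycle.mul_left hr₂cocycle (r₀ γp) γm y y'
  · simp only [hrp, hrm, hr₀]
    linear_combination (r₁ γp x * r₂ γm y) * exp_neg_sum_insert_balance hφ hx hy

/-- Given a symmetric pair interaction `φ` and one-component relative energy
densities `r₁, r₂` (nonnegative and satisfying the one-component cocycle
identity), the partial relative energy densities
`r⁺(γ⁺, γ⁻, x) := r₀(γ⁻, x)·r₁(γ⁺, x)` and `r⁻(γ⁺, γ⁻, y) := r₀(γ⁺, y)·r₂(γ⁻, y)`,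
where `r₀(γ, x) := exp(−∑_{y∈γ} φ(x,y))`, satisfy the partial cocycle
identities (CCI⁺), (CCI⁻) and the balance identity (Bal). -/
theorem pair_potential_perturbation {X : Type*} [DecidableEq X]
    (φ : X → X → ℝ) (hφ : ∀ x y, φ x y = φ y x)
    (r₁ r₂ : Finset X → X → ℝ)
    (hr₁nonneg : ∀ (γ : Finset X) (x : X), 0 ≤ r₁ γ x)
    (hr₂nonneg : ∀ (γ : Finset X) (x : X), 0 ≤ r₂ γ x)
    (hr₁cocycle : ∀ (γ : Finset X) (x x' : X),
      r₁ (insert x' γ) x * r₁ γ x' = r₁ (insert x γ) x' * r₁ γ x)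
    (hr₂cocycle : ∀ (γ : Finset X) (x x' : X),
      r₂ (insert x' γ) x * r₂ γ x' = r₂ (insert x γ) x' * r₂ γ x)
    (r₀ : Finset X → X → ℝ) (hr₀ : ∀ (γ : Finset X) (x : X),
      r₀ γ x = Real.exp (-(∑ y ∈ γ, φ x y)))
    (rp rm : Finset X → Finset X → X → ℝ)
    (hrp : ∀ (γp γm : Finset X) (x : X), rp γp γm x = r₀ γm x * r₁ γp x)
    (hrm : ∀ (γp γm : Finset X) (y : X), rm γp γm y = r₀ γp y * r₂ γm y) :
    (∀ (γp γm : Finset X) (x x' : X),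
      rp (insert x' γp) γm x * rp γp γm x' = rp (insert x γp) γm x' * rp γp γm x)
    ∧ (∀ (γp γm : Finset X) (y y' : X),
      rm γp (insert y' γm) y * rm γp γm y' = rm γp (insert y γm) y' * rm γp γm y)
    ∧ (∀ (γp γm : Finset X) (x y : X), x ∉ γp → y ∉ γm →
      rp γp (insert y γm) x * rm γp γm y = rm (insert x γp) γm y * rp γp γm x) :=
  pair_potential_perturbation_general φ hφ r₁ r₂ hr₁cocycle hr₂cocycle r₀ hr₀ rp rm hrp hrm
end
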